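/- With the same definitions, the stronger inequality |T| ≤ (k/(k+1))·|I ∪ U| holds, i.e., (k+1)|T| ≤ k(|I| + |U|) (noting I and U are disjoint since I ⊆ [0, b−1] and U ⊆ [ka+2b, (k+1)a+b−1]). -/

import Mathlib

/-- `Sx a b k x = {x, x+a, ..., x+k*a, x+k*a+b}` -/
def Sx (a b k x : ℤ) : Set ℤ :=
  {y | ∃ j : ℤ, 0 ≤ j ∧ j ≤ k ∧ y = x + j * a} ∪ {x + k * a + b}

/-!
Put `d = a - b`, so `0 < d < b`. An element `t = i * a + b + c` of `T` (row `i`, column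
`1 ≤ c < d`) forces the hole `t + (k - i) * a + b = c + k * a + 2 * b` of `A` in the top window,
and two elements of `T` never share a column; so `T` forces `|T|` distinct holes in `U`.

Walk from `x = c`: the positions `x + q * a` (`q ≤ i`) and `x + k * a + b` avoid `A`. If no
`x + q * a` with `i < q ≤ k` lies in `A`, then `x ∈ I`. Otherwise such a point shows that the
same pattern holds at `x + d`, with a larger row bound. Once `x ≥ b`, the point `x + k * a + b`
is a hole of the top window: either an unforced one, or the hole forced by an element of `T` in
a strictly higher row. As `x ≡ c [ZMOD d]` throughout, the end of the walk defines a map `F`,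
injective on `T`, increasing rows, and sending `T` outside `T` only into `I` and the unforced
holes. Hence `T` splits into at most `|I| + |U| - |T|` chains of length at most `k`.
-/

open Set

section Chains

variable {α : Type*} {f : α → α} {S : Set α}

theorem exists_iterate_eq_of_rank_lt (r : α → ℕ)
    (hrf : ∀ x ∈ S, f x ∈ S → r x < r (f x)) :
    ∀ n, ∀ x ∈ S, r x < n → ∃ s ∈ S \ f '' S, ∃ j < n, f^[j] s = x := by
  intro n
  induction n with
  | zero => intro x _ h; omega
  | succ n ih =>
    intro x hx hxn
    by_cases hxf : x ∈ f '' S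
    · obtain ⟨y, hy, rfl⟩ := hxf
      obtain ⟨s, hs, j, hj, rfl⟩ := ih y hy (by have := hrf y hy hx; omega)
      exact ⟨s, hs, j + 1, by omega, Function.iterate_succ_apply' f j s⟩
    · exact ⟨x, ⟨hx, hxf⟩, 0, by omega, rfl⟩

/-- Following `f` backwards, every point of `S` is reached from `S \ f '' S` in fewer than `k`
steps, and `S \ f '' S` is as large as `f '' S \ S` because `f` is injective on `S`. -/
theorem ncard_le_mul_ncard_image_diff (hS : S.Finite) (hf : S.InjOn f) (r : α → ℕ) {k : ℕ}
    (hr : ∀ x ∈ S, r x < k) (hrf : ∀ x ∈ S, f x ∈ S → r x < r (f x)) :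
    S.ncard ≤ k * (f '' S \ S).ncard := by
  have hcover : S ⊆ (fun p : α × ℕ => f^[p.2] p.1) '' ((S \ f '' S) ×ˢ Iio k) := by
    intro x hx
    obtain ⟨s, hs, j, hj, rfl⟩ := exists_iterate_eq_of_rank_lt r hrf k x hx (hr x hx)
    exact ⟨(s, j), ⟨hs, hj⟩, rfl⟩
  have hstarts : (S \ f '' S).ncard = (f '' S \ S).ncard :=
    (ncard_eq_ncard_iff_ncard_sdiff_eq_ncard_sdiff hS (hS.image f)).1 hf.ncard_image.symm
  calc S.ncard ≤ ((S \ f '' S) ×ˢ Iio k).ncard :=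
        (ncard_le_ncard hcover ((hS.sdiff.prod (finite_Iio k)).image _)).trans
          (ncard_image_le (hS.sdiff.prod (finite_Iio k)))
    _ = k * (f '' S \ S).ncard := by rw [ncard_prod, hstarts, ncard_Iio_nat, mul_comm]

end Chains

namespace MAvoiding

def Avoids (a b k : ℤ) (A : Set ℤ) : Prop :=
  ∀ x ∈ A, ∀ y ∈ A,
    ¬ ((∃ j : ℤ, 1 ≤ j ∧ j ≤ k ∧ x - y = j * a) ∨
       (∃ j : ℤ, 0 ≤ j ∧ j ≤ k ∧ x - y = j * a + b))

/-- `gapPart`, `topHoles` and `freeStarts` are the sets `T`, `U` and `I`. -/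
def gapPart (a b k : ℤ) (A : Set ℤ) : Set ℤ :=
  A ∩ ⋃ i ∈ Icc (0:ℤ) (k-1), Icc (i*a + b + 1) ((i+1)*a - 1)

def topHoles (a b k : ℤ) (A : Set ℤ) : Set ℤ :=
  Icc (k*a + 2*b) ((k+1)*a + b - 1) \ A

def freeStarts (a b k : ℤ) (A : Set ℤ) : Set ℤ :=
  {x ∈ Icc (0:ℤ) (b-1) | A ∩ Sx a b k x = ∅}

/-- An element `t` of `gapPart a b k A` lies in the gap `(i * a + b, (i + 1) * a)` with
`i = gapRow a b t`, at offset `gapCol a b t` from its left end. -/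
def gapRow (a b t : ℤ) : ℤ := (t - b) / a

def gapCol (a b t : ℤ) : ℤ := (t - b) % a

/-- For `t ∈ gapPart a b k A` this is `t + (k - gapRow a b t) * a + b`, a hole of `A` in the top
window. -/
def topHole (a b k t : ℤ) : ℤ := gapCol a b t + k * a + 2 * b

def Blocked (a b k : ℤ) (A : Set ℤ) (x p : ℤ) : Prop :=
  (∀ q, 0 ≤ q → q < p → x + q * a ∉ A) ∧ x + k * a + b ∉ A

/-- The possible ends `y` of the walk started at column `c` with row bound `p`. The congruences
remember `c` modulo `a - b`, which makes the walk injective. -/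
def WalkEnd (a b k : ℤ) (A : Set ℤ) (c p y : ℤ) : Prop :=
  (y ∈ freeStarts a b k A ∧ y ≡ c [ZMOD a - b]) ∨
  (y ∈ topHoles a b k A \ topHole a b k '' gapPart a b k A ∧
    y - (k * a + b) ≡ c [ZMOD a - b]) ∨
  (y ∈ gapPart a b k A ∧ gapCol a b y + b ≡ c [ZMOD a - b] ∧ p ≤ gapRow a b y)

variable {a b k : ℤ} {A : Set ℤ}

namespace Avoids

theorem sub_ne_mul (hA : Avoids a b k A) {x y j : ℤ} (hx : x ∈ A) (hy : y ∈ A) (hj : 1 ≤ j)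
    (hjk : j ≤ k) : x - y ≠ j * a :=
  fun h => hA x hx y hy (Or.inl ⟨j, hj, hjk, h⟩)

theorem sub_ne_mul_add (hA : Avoids a b k A) {x y j : ℤ} (hx : x ∈ A) (hy : y ∈ A)
    (hj : 0 ≤ j) (hjk : j ≤ k) : x - y ≠ j * a + b :=
  fun h => hA x hx y hy (Or.inr ⟨j, hj, hjk, h⟩)

end Avoids

theorem gapRow_mul_add_gapCol (a b t : ℤ) : t = gapRow a b t * a + b + gapCol a b t := by
  have := Int.mul_ediv_add_emod (t - b) a
  rw [gapRow, gapCol]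
  linarith

theorem gapRow_gapCol_bounds (ha : 0 < a) (hb : 0 < b) {t : ℤ} (ht : t ∈ gapPart a b k A) :
    0 ≤ gapRow a b t ∧ gapRow a b t ≤ k - 1 ∧
      1 ≤ gapCol a b t ∧ gapCol a b t ≤ a - b - 1 := by
  obtain ⟨-, hti⟩ := ht
  simp only [mem_iUnion, mem_Icc, exists_prop] at hti
  obtain ⟨i, ⟨hi0, hik⟩, hlo, hhi⟩ := hti
  have hsplit : t - b = (t - i * a - b) + a * i := by ring
  have h0 : 0 ≤ t - i * a - b := by linarith
  have h1 : t - i * a - b < a := by linarith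
  have hrow : gapRow a b t = i := by
    rw [gapRow, hsplit, Int.add_mul_ediv_left _ _ ha.ne', Int.ediv_eq_zero_of_lt h0 h1, zero_add]
  have hcol : gapCol a b t = t - i * a - b := by
    rw [gapCol, hsplit, Int.add_mul_emod_self_left, Int.emod_eq_of_lt h0 h1]
  refine ⟨?_, ?_, ?_, ?_⟩ <;> linarith

theorem gapPart_finite (ha : 0 < a) (hb : 0 < b) : (gapPart a b k A).Finite := by
  refine (finite_Icc b (k * a + b)).subset fun t ht => ?_
  obtain ⟨h0, hk, h1, h2⟩ := gapRow_gapCol_bounds ha hb ht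
  have ht := gapRow_mul_add_gapCol a b t
  constructor
  · nlinarith [mul_nonneg h0 ha.le]
  · nlinarith [mul_le_mul_of_nonneg_right hk ha.le]

theorem topHoles_finite : (topHoles a b k A).Finite :=
  (finite_Icc _ _).subset sdiff_subset

theorem freeStarts_finite : (freeStarts a b k A).Finite :=
  (finite_Icc _ _).subset fun _ hx => hx.1

theorem gapCol_injOn (hA : Avoids a b k A) (ha : 0 < a) (hb : 0 < b) :
    (gapPart a b k A).InjOn (gapCol a b) := by
  intro t ht t' ht' hcol
  have bt := gapRow_gapCol_bounds ha hb ht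
  have bt' := gapRow_gapCol_bounds ha hb ht'
  have et := gapRow_mul_add_gapCol a b t
  have et' := gapRow_mul_add_gapCol a b t'
  rcases lt_trichotomy (gapRow a b t) (gapRow a b t') with h | h | h
  · exact absurd (by linear_combination et' - et - hcol)
      (hA.sub_ne_mul ht'.1 ht.1 (j := gapRow a b t' - gapRow a b t) (by omega) (by omega))
  · rw [et, et', h, hcol]
  · exact absurd (by linear_combination et - et' + hcol)
      (hA.sub_ne_mul ht.1 ht'.1 (j := gapRow a b t - gapRow a b t') (by omega) (by omega))

theorem topHole_mem_topHoles (hA : Avoids a b k A) (ha : 0 < a) (hb : 0 < b) {t : ℤ}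
    (ht : t ∈ gapPart a b k A) : topHole a b k t ∈ topHoles a b k A := by
  obtain ⟨h0, hk, h1, h2⟩ := gapRow_gapCol_bounds ha hb ht
  have et := gapRow_mul_add_gapCol a b t
  refine ⟨⟨by unfold topHole; linarith, by unfold topHole; linarith⟩, fun h => ?_⟩
  exact hA.sub_ne_mul_add h ht.1 (j := k - gapRow a b t) (by omega) (by omega)
    (by unfold topHole; linear_combination -et)

theorem topHole_injOn (hA : Avoids a b k A) (ha : 0 < a) (hb : 0 < b) :
    (gapPart a b k A).InjOn (topHole a b k) :=
  fun _ ht _ ht' h => gapCol_injOn hA ha hb ht ht' (by unfold topHole at h; linarith)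

theorem notMem_of_mem_freeStarts (hk : 0 ≤ k) {x : ℤ} (hx : x ∈ freeStarts a b k A) :
    x ∉ A :=
  fun hxA => (eq_empty_iff_forall_notMem.1 hx.2) x ⟨hxA, Or.inl ⟨0, le_rfl, hk, by ring⟩⟩

theorem notMem_topHoles_of_mem_freeStarts (ha : 0 < a) (hb : 0 < b) (hk : 0 ≤ k) {x : ℤ}
    (hx : x ∈ freeStarts a b k A) : x ∉ topHoles a b k A :=
  fun hxU => by nlinarith [hx.1.2, hxU.1.1, mul_nonneg hk ha.le]

namespace WalkEnd

variable {c c' p p' y : ℤ}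

theorem mono (h : WalkEnd a b k A c' p' y) (hc : c ≡ c' [ZMOD a - b]) (hp : p ≤ p') :
    WalkEnd a b k A c p y := by
  rcases h with ⟨hy, hy'⟩ | ⟨hy, hy'⟩ | ⟨hy, hy', hpy⟩
  · exact Or.inl ⟨hy, hy'.trans hc.symm⟩
  · exact Or.inr (Or.inl ⟨hy, hy'.trans hc.symm⟩)
  · exact Or.inr (Or.inr ⟨hy, hy'.trans hc.symm, hp.trans hpy⟩)

theorem modEq (ha : 0 < a) (hb : 0 < b) (hk : 0 ≤ k) (h : WalkEnd a b k A c p y)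
    (h' : WalkEnd a b k A c' p' y) : c ≡ c' [ZMOD a - b] := by
  have hIA := notMem_of_mem_freeStarts (a := a) (b := b) (A := A) hk (x := y)
  have hIU := notMem_topHoles_of_mem_freeStarts (A := A) ha hb hk (x := y)
  rcases h with ⟨hy, hc⟩ | ⟨⟨hy, -⟩, hc⟩ | ⟨hy, hc, -⟩ <;>
    rcases h' with ⟨hy', hc'⟩ | ⟨⟨hy', -⟩, hc'⟩ | ⟨hy', hc', -⟩
  · exact hc.symm.trans hc'
  · exact (hIU hy hy').elim
  · exact (hIA hy hy'.1).elim
  · exact (hIU hy' hy).elim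
  · exact hc.symm.trans hc'
  · exact (hy.2 hy'.1).elim
  · exact (hIA hy' hy.1).elim
  · exact (hy'.2 hy.1).elim
  · exact hc.symm.trans hc'

theorem le_gapRow (hk : 0 ≤ k) (h : WalkEnd a b k A c p y) (hy : y ∈ gapPart a b k A) :
    p ≤ gapRow a b y := by
  rcases h with ⟨hy', -⟩ | ⟨⟨hy', -⟩, -⟩ | ⟨-, -, hp⟩
  · exact (notMem_of_mem_freeStarts hk hy' hy.1).elim
  · exact (hy'.2 hy.1).elim
  · exact hp

end WalkEnd

section Blocked

variable {x p : ℤ}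

theorem Avoids.blocked_add_sub (hA : Avoids a b k A) (hx : x + p * a ∈ A) (hp : 1 ≤ p)
    (hpk : p ≤ k) : Blocked a b k A (x + (a - b)) p :=
  ⟨fun q hq0 hqp hq => hA.sub_ne_mul_add hx hq (j := p - 1 - q) (by omega) (by omega) (by ring),
    fun h => hA.sub_ne_mul h hx (j := k + 1 - p) (by omega) (by omega) (by ring)⟩

theorem Avoids.blocked_gapCol (hA : Avoids a b k A) (ha : 0 < a) (hb : 0 < b) {t : ℤ}
    (ht : t ∈ gapPart a b k A) : Blocked a b k A (gapCol a b t) (gapRow a b t + 1) := by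
  obtain ⟨h0, hk, -, -⟩ := gapRow_gapCol_bounds ha hb ht
  have et := gapRow_mul_add_gapCol a b t
  refine ⟨fun q hq0 hqp hq => ?_, fun h => ?_⟩
  · exact hA.sub_ne_mul_add ht.1 hq (j := gapRow a b t - q) (by omega) (by omega)
      (by linear_combination et)
  · exact hA.sub_ne_mul h ht.1 (j := k - gapRow a b t) (by omega) (by omega)
      (by linear_combination -et)

theorem mem_freeStarts_of_blocked (hx0 : 0 ≤ x) (hxb : x ≤ b - 1) (hblk : Blocked a b k A x p)
    (hrest : ∀ q, p ≤ q → q ≤ k → x + q * a ∉ A) : x ∈ freeStarts a b k A := by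
  refine ⟨⟨hx0, hxb⟩, eq_empty_iff_forall_notMem.2 ?_⟩
  rintro z ⟨hzA, ⟨j, hj0, hjk, rfl⟩ | rfl⟩
  · rcases lt_or_ge j p with h | h
    exacts [hblk.1 j hj0 h hzA, hrest j h hjk hzA]
  · exact hblk.2 hzA

theorem exists_walkEnd_of_blocked_of_le (ha : 0 < a) (hb : 0 < b) (hbx : b ≤ x)
    (hxa : x ≤ a - 1) (hblk : Blocked a b k A x p) : ∃ y, WalkEnd a b k A x p y := by
  by_cases hT : ∃ t ∈ gapPart a b k A, topHole a b k t = x + k * a + b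
  · obtain ⟨t, ht, htx⟩ := hT
    have hcol : gapCol a b t + b = x := by unfold topHole at htx; linarith
    refine ⟨t, Or.inr (Or.inr ⟨ht, by rw [hcol], ?_⟩)⟩
    by_contra! hlt
    have et := gapRow_mul_add_gapCol a b t
    exact hblk.1 _ (gapRow_gapCol_bounds ha hb ht).1 hlt (by convert ht.1 using 1; linarith)
  · push Not at hT
    refine ⟨x + k * a + b, Or.inr (Or.inl ⟨⟨⟨⟨?_, ?_⟩, hblk.2⟩, ?_⟩, ?_⟩)⟩
    · linarith
    · linarith
    · rintro ⟨t, ht, h⟩; exact hT t ht h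
    · rw [show x + k * a + b - (k * a + b) = x by ring]

end Blocked

theorem Avoids.exists_walkEnd_of_blocked (hA : Avoids a b k A) (ha : 0 < a) (hb : 0 < b)
    (hba : b < a) {x p : ℤ} (hx0 : 0 ≤ x) (hxb : x ≤ b - 1) (hp : 1 ≤ p)
    (hblk : Blocked a b k A x p) : ∃ y, WalkEnd a b k A x p y := by
  by_cases hnext : ∃ q, p ≤ q ∧ q ≤ k ∧ x + q * a ∈ A
  · obtain ⟨p', hpp', hp'k, hp'A⟩ := hnext
    have hblk' := hA.blocked_add_sub hp'A (by omega) hp'k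
    obtain ⟨y, hy⟩ : ∃ y, WalkEnd a b k A (x + (a - b)) p' y := by
      by_cases hx' : x + (a - b) ≤ b - 1
      · exact hA.exists_walkEnd_of_blocked ha hb hba (by omega) hx' (by omega) hblk'
      · exact exists_walkEnd_of_blocked_of_le ha hb (by omega) (by omega) hblk'
    exact ⟨y, hy.mono Int.add_modEq_right.symm hpp'⟩
  · push Not at hnext
    exact ⟨x, Or.inl ⟨mem_freeStarts_of_blocked hx0 hxb hblk hnext, Int.ModEq.refl x⟩⟩
termination_by (b - x).toNat

theorem Avoids.exists_walkEnd_of_mem_gapPart (hA : Avoids a b k A) (ha : 0 < a) (hb : 0 < b)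
    (hba : b < a) (hab : a < 2 * b) {t : ℤ} (ht : t ∈ gapPart a b k A) :
    ∃ y, WalkEnd a b k A (gapCol a b t) (gapRow a b t + 1) y := by
  obtain ⟨h0, hk, h1, h2⟩ := gapRow_gapCol_bounds ha hb ht
  exact hA.exists_walkEnd_of_blocked ha hb hba (by omega) (by omega) (by omega)
    (hA.blocked_gapCol ha hb ht)

theorem Avoids.injOn_of_walkEnd (hA : Avoids a b k A) (ha : 0 < a) (hb : 0 < b) (hk : 0 ≤ k)
    {F : ℤ → ℤ}
    (hF : ∀ t ∈ gapPart a b k A, WalkEnd a b k A (gapCol a b t) (gapRow a b t + 1) (F t)) :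
    (gapPart a b k A).InjOn F := by
  intro t ht t' ht' hFt
  have hmod := (hF t ht).modEq ha hb hk (hFt ▸ hF t' ht')
  obtain ⟨-, -, h1, h2⟩ := gapRow_gapCol_bounds ha hb ht
  obtain ⟨-, -, h1', h2'⟩ := gapRow_gapCol_bounds ha hb ht'
  refine gapCol_injOn hA ha hb ht ht' ?_
  rwa [Int.ModEq, Int.emod_eq_of_lt (by omega) (by omega),
    Int.emod_eq_of_lt (by omega) (by omega)] at hmod

theorem image_diff_subset_of_walkEnd {F : ℤ → ℤ}
    (hF : ∀ t ∈ gapPart a b k A, WalkEnd a b k A (gapCol a b t) (gapRow a b t + 1) (F t)) :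
    F '' gapPart a b k A \ gapPart a b k A ⊆
      freeStarts a b k A ∪ (topHoles a b k A \ topHole a b k '' gapPart a b k A) := by
  rintro _ ⟨⟨t, ht, rfl⟩, hFt⟩
  rcases hF t ht with ⟨h, -⟩ | ⟨h, -⟩ | ⟨h, -⟩
  exacts [Or.inl h, Or.inr h, (hFt h).elim]

theorem Avoids.ncard_gapPart_le_mul (hA : Avoids a b k A) (ha : 0 < a) (hb : 0 < b) (hk : 0 ≤ k)
    {F : ℤ → ℤ}
    (hF : ∀ t ∈ gapPart a b k A, WalkEnd a b k A (gapCol a b t) (gapRow a b t + 1) (F t)) :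
    ((gapPart a b k A).ncard : ℤ) ≤ k * (F '' gapPart a b k A \ gapPart a b k A).ncard := by
  have := Nat.cast_le (α := ℤ) |>.2 <| ncard_le_mul_ncard_image_diff (gapPart_finite ha hb)
    (hA.injOn_of_walkEnd ha hb hk hF) (fun t => (gapRow a b t).toNat) (k := k.toNat)
    (fun t ht => by have := gapRow_gapCol_bounds ha hb ht; omega)
    (fun t ht hFt => by
      have := (hF t ht).le_gapRow hk hFt
      have := (gapRow_gapCol_bounds ha hb ht).1
      omega)
  rwa [Nat.cast_mul, Int.toNat_of_nonneg hk] at this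

theorem Avoids.ncard_image_diff_add_ncard_le (hA : Avoids a b k A) (ha : 0 < a) (hb : 0 < b)
    {F : ℤ → ℤ}
    (hF : ∀ t ∈ gapPart a b k A, WalkEnd a b k A (gapCol a b t) (gapRow a b t + 1) (F t)) :
    (F '' gapPart a b k A \ gapPart a b k A).ncard + (gapPart a b k A).ncard ≤
      (freeStarts a b k A).ncard + (topHoles a b k A).ncard := by
  have hexits : (F '' gapPart a b k A \ gapPart a b k A).ncard ≤
      (freeStarts a b k A).ncard + (topHoles a b k A \ topHole a b k '' gapPart a b k A).ncard :=
    (ncard_le_ncard (image_diff_subset_of_walkEnd hF)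
      (freeStarts_finite.union (topHoles_finite.subset sdiff_subset))).trans (ncard_union_le _ _)
  have hforced : (topHoles a b k A \ topHole a b k '' gapPart a b k A).ncard +
      (gapPart a b k A).ncard = (topHoles a b k A).ncard := by
    rw [← (topHole_injOn hA ha hb).ncard_image]
    exact ncard_sdiff_add_ncard_of_subset
      (image_subset_iff.2 fun t ht => topHole_mem_topHoles hA ha hb ht) topHoles_finite
  omega

end MAvoiding

open MAvoiding

theorem stmt16_general
    (a b k : ℤ) (ha : 0 < a) (hb : 0 < b) (hba : b < a) (hab : a < 2*b) (hk : 1 ≤ k)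
    (A : Set ℤ)
    (havoid : ∀ x ∈ A, ∀ y ∈ A,
      ¬ ((∃ j : ℤ, 1 ≤ j ∧ j ≤ k ∧ x - y = j * a) ∨
         (∃ j : ℤ, 0 ≤ j ∧ j ≤ k ∧ x - y = j * a + b)))
    (T U I : Set ℤ)
    (hT : T = A ∩ ⋃ i ∈ Set.Icc (0:ℤ) (k-1), Set.Icc (i*a + b + 1) ((i+1)*a - 1))
    (hU : U = Set.Icc (k*a + 2*b) ((k+1)*a + b - 1) \ A)
    (hI : I = {x ∈ Set.Icc (0:ℤ) (b-1) | A ∩ Sx a b k x = ∅}) :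
    (k + 1) * (T.ncard : ℤ) ≤ k * ((I.ncard : ℤ) + (U.ncard : ℤ)) := by
  have hA : Avoids a b k A := havoid
  obtain rfl : T = gapPart a b k A := hT
  obtain rfl : U = topHoles a b k A := hU
  obtain rfl : I = freeStarts a b k A := hI
  have hk0 : 0 ≤ k := by omega
  choose! F hF using fun t (ht : t ∈ gapPart a b k A) =>
    hA.exists_walkEnd_of_mem_gapPart ha hb hba hab ht
  have hchains := hA.ncard_gapPart_le_mul ha hb hk0 hF
  have hexits := Nat.cast_le (α := ℤ) |>.2 (hA.ncard_image_diff_add_ncard_le ha hb hF)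
  push_cast at hexits
  linear_combination hchains + mul_le_mul_of_nonneg_left hexits hk0

theorem stmt16
    (a b k : ℤ) (ha : 0 < a) (hb : 0 < b) (hba : b < a) (hab : a < 2*b) (hk : 1 ≤ k)
    (A : Set ℤ) (h0A : (0:ℤ) ∈ A)
    (havoid : ∀ x ∈ A, ∀ y ∈ A,
      ¬ ((∃ j : ℤ, 1 ≤ j ∧ j ≤ k ∧ x - y = j * a) ∨
         (∃ j : ℤ, 0 ≤ j ∧ j ≤ k ∧ x - y = j * a + b)))
    (T U I : Set ℤ)
    (hT : T = A ∩ ⋃ i ∈ Set.Icc (0:ℤ) (k-1), Set.Icc (i*a + b + 1) ((i+1)*a - 1))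
    (hU : U = Set.Icc (k*a + 2*b) ((k+1)*a + b - 1) \ A)
    (hI : I = {x ∈ Set.Icc (0:ℤ) (b-1) | A ∩ Sx a b k x = ∅}) :
    (k + 1) * (T.ncard : ℤ) ≤ k * ((I.ncard : ℤ) + (U.ncard : ℤ)) :=
  stmt16_general a b k ha hb hba hab hk A havoid T U I hT hU hI
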